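/- Let k, ℓ ∈ ℕ with k−2 ≥ ℓ ≥ 1. Then the map x ↦ x + 2F_{k−2} gives a bijection from V̄_ℓ ∩ [F_ℓ, F_{k−1}+F_{k−3}] onto V̄_ℓ ∩ [F_ℓ+2F_{k−2}, F_{k+1}]. -/
import Mathlib


noncomputable section

/-- `F i` is the Fibonacci number `F_i` of the paper (`F_0 = 1`, `F_1 = 1`, `F_2 = 2`, ...). -/
def F (i : ℕ) : ℕ := Nat.fib (i + 1)

/-- `x` belongs to the set `F̄ = {0,1,2,3,5,8,...}` of all Fibonacci numbers (including `0`). -/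
def IsFib (x : ℕ) : Prop := ∃ i : ℕ, Nat.fib i = x

open scoped Classical in
/-- The map `ῑ : ℕ → ℕ`: `ῑ(x) = x` if `x ∈ F̄`, and `ῑ(x) = x - 2 F_{i-2}`
if `F_i < x < F_{i+1}` for the (unique) integer `i ≥ 3`. -/
noncomputable def iotaBar (x : ℕ) : ℕ :=
  if IsFib x then x
  else x - 2 * F (sInf {i : ℕ | x < F (i + 1)} - 2)

/-- `ᾱ(x)` is the eventual constant value of the iterates of `ῑ` at `x`
(the iterates stabilize after at most `x` steps). -/
noncomputable def alphaBar (x : ℕ) : ℕ := iotaBar^[x] x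

/-- `V̄_ℓ = {x ∈ ℕ : ᾱ(x) ≥ F_ℓ}`. -/
def VBar (ℓ : ℕ) : Set ℕ := {x : ℕ | F ℓ ≤ alphaBar x}

/-- `x < y` are consecutive elements of `S`. -/
def ConsecIn (S : Set ℕ) (x y : ℕ) : Prop :=
  x ∈ S ∧ y ∈ S ∧ x < y ∧ ∀ z ∈ S, ¬(x < z ∧ z < y)

lemma F_pos (i : ℕ) : 1 ≤ F i := Nat.fib_pos.mpr (Nat.succ_pos i)

lemma F_mono : Monotone F := fun _ _ h => Nat.fib_mono (by omega)

lemma F_lt_F_succ {i : ℕ} (hi : 1 ≤ i) : F i < F (i + 1) :=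
  Nat.fib_lt_fib_succ (by omega)

lemma F_add_two (i : ℕ) : F (i + 2) = F (i + 1) + F i := by
  have h : Nat.fib (i + 2 + 1) = Nat.fib (i + 1) + Nat.fib (i + 1 + 1) :=
    Nat.fib_add_two
  simp only [F]
  omega

lemma lt_of_F_lt {i j : ℕ} (h : F i < F j) : i < j := by
  by_contra hc
  exact absurd (F_mono (by omega : j ≤ i)) (by omega)

lemma isFib_F (i : ℕ) : IsFib (F i) := ⟨i + 1, rfl⟩

lemma iotaBar_of_isFib {x : ℕ} (h : IsFib x) : iotaBar x = x := by
  simp [iotaBar, h]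

lemma not_isFib_of_between {i x : ℕ} (h1 : F i < x) (h2 : x < F (i + 1)) :
    ¬ IsFib x := by
  rintro ⟨j, rfl⟩
  rcases le_or_gt j (i + 1) with hj | hj
  · have := Nat.fib_mono hj
    simp only [F] at h1
    omega
  · have := Nat.fib_mono (show i + 1 + 1 ≤ j by omega)
    simp only [F] at h2
    omega

lemma iotaBar_of_between {i x : ℕ} (h1 : F i < x) (h2 : x < F (i + 1)) :
    iotaBar x = x - 2 * F (i - 2) := by
  have hnf := not_isFib_of_between h1 h2
  have hne : {j : ℕ | x < F (j + 1)}.Nonempty := ⟨i, h2⟩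
  have hmem := Nat.sInf_mem hne
  have hle : sInf {j : ℕ | x < F (j + 1)} ≤ i := Nat.sInf_le h2
  have hge : i ≤ sInf {j : ℕ | x < F (j + 1)} := by
    have h3 : F i < F (sInf {j : ℕ | x < F (j + 1)} + 1) := lt_trans h1 hmem
    have := lt_of_F_lt h3
    omega
  rw [iotaBar, if_neg hnf, le_antisymm hle hge]

lemma iotaBar_lt_of_not_isFib {x : ℕ} (h : ¬ IsFib x) : iotaBar x < x := by
  have hx : x ≠ 0 := by rintro rfl; exact h ⟨0, rfl⟩
  rw [iotaBar, if_neg h]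
  have := F_pos (sInf {i : ℕ | x < F (i + 1)} - 2)
  omega

lemma isFib_iter : ∀ n x : ℕ, x ≤ n → IsFib (iotaBar^[n] x) := by
  intro n
  induction n with
  | zero => intro x hx; interval_cases x; exact ⟨0, rfl⟩
  | succ n ih =>
    intro x hx
    by_cases h : IsFib x
    · rw [Function.iterate_fixed (iotaBar_of_isFib h)]; exact h
    · rw [Function.iterate_succ_apply]
      exact ih _ (by have := iotaBar_lt_of_not_isFib h; omega)

lemma iter_stab {n x : ℕ} (h : x ≤ n) : iotaBar^[n] x = alphaBar x := by
  have hn : n = (n - x) + x := by omega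
  rw [alphaBar, hn, Function.iterate_add_apply,
    Function.iterate_fixed (iotaBar_of_isFib (isFib_iter x x le_rfl))]

lemma alphaBar_of_isFib {x : ℕ} (h : IsFib x) : alphaBar x = x :=
  Function.iterate_fixed (iotaBar_of_isFib h) x

lemma alphaBar_iotaBar (x : ℕ) : alphaBar (iotaBar x) = alphaBar x := by
  by_cases h : IsFib x
  · rw [iotaBar_of_isFib h]
  · have hlt := iotaBar_lt_of_not_isFib h
    have hx : 1 ≤ x := by omega
    have heq : alphaBar x = iotaBar^[x - 1] (iotaBar x) := by
      rw [alphaBar, ← Function.iterate_succ_apply]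
      congr 1
      omega
    rw [heq, iter_stab (by omega)]

lemma main_lemma : ∀ m ℓ x : ℕ, 1 ≤ ℓ → ℓ ≤ m + 1 → F ℓ ≤ x →
    x ≤ F (m + 2) + F m →
    (F ℓ ≤ alphaBar x ↔ F ℓ ≤ alphaBar (x + 2 * F (m + 1))) := by
  intro m
  induction m using Nat.strong_induction_on with
  | _ m ih =>
    intro ℓ x hℓ hk hx1 hx2
    rcases lt_trichotomy x (F m) with hc | hc | hc
    · -- case D : x < F m, so ℓ < m, recurse at m - 2
      have hℓm : ℓ < m := lt_of_F_lt (lt_of_le_of_lt hx1 hc)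
      have hm2 : 2 ≤ m := by omega
      obtain ⟨m', rfl⟩ : ∃ m', m = m' + 2 := ⟨m - 2, by omega⟩
      have hk' : ℓ ≤ m' + 1 := by omega
      have hx2' : x ≤ F (m' + 4) + F (m' + 2) := hx2
      have hc' : x < F (m' + 2) := hc
      set y := x + 2 * F (m' + 3) with hy
      have hF2 : F (m' + 2) = F (m' + 1) + F m' := F_add_two m'
      have hF3 : F (m' + 3) = F (m' + 2) + F (m' + 1) := F_add_two (m' + 1)
      have hF4 : F (m' + 4) = F (m' + 3) + F (m' + 2) := F_add_two (m' + 2)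
      have hF5 : F (m' + 4 + 1) = F (m' + 4) + F (m' + 3) := F_add_two (m' + 3)
      have hxpos : 1 ≤ x := le_trans (F_pos ℓ) hx1
      have hy1 : F (m' + 4) < y := by omega
      have hy2 : y < F (m' + 4 + 1) := by omega
      have hiy : iotaBar y = x + 2 * F (m' + 1) := by
        rw [iotaBar_of_between hy1 hy2]
        show y - 2 * F (m' + 2) = _
        omega
      have hay : alphaBar (x + 2 * F (m' + 2 + 1)) = alphaBar (x + 2 * F (m' + 1)) := by
        rw [← alphaBar_iotaBar y, hiy]
      rw [hay]
      exact ih m' (by omega) ℓ x hℓ hk' hx1 (by omega)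
    · -- case B : x = F m, y = F (m+3)
      subst hc
      have e1 : F (m + 2) = F (m + 1) + F m := F_add_two m
      have e2 : F (m + 3) = F (m + 2) + F (m + 1) := F_add_two (m + 1)
      have h1 : alphaBar (F m) = F m := alphaBar_of_isFib (isFib_F m)
      have h2 : F m + 2 * F (m + 1) = F (m + 3) := by omega
      rw [h1, h2, alphaBar_of_isFib (isFib_F _)]
      have hR : F ℓ ≤ F (m + 3) := le_trans hx1 (F_mono (by omega))
      exact ⟨fun _ => hR, fun _ => hx1⟩
    · rcases eq_or_lt_of_le hx2 with hc2 | hc2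
      · -- case A : x = F (m+2) + F m, y = F (m+4)
        have hF2 : F (m + 2) = F (m + 1) + F m := F_add_two m
        have hF3 : F (m + 3) = F (m + 2) + F (m + 1) := F_add_two (m + 1)
        have hF4 : F (m + 4) = F (m + 3) + F (m + 2) := F_add_two (m + 2)
        have hy : x + 2 * F (m + 1) = F (m + 4) := by omega
        rw [hy, alphaBar_of_isFib (isFib_F _)]
        have hLHS : F ℓ ≤ alphaBar x := by
          rcases Nat.eq_zero_or_pos m with rfl | hm
          · have hx3 : x = 3 := by
              have e0 : F 0 = 1 := rfl
              have e2' : F (0 + 2) = 2 := rfl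
              omega
            have h3 : IsFib 3 := ⟨4, rfl⟩
            have hℓ1 : F ℓ ≤ F 1 := F_mono hk
            have e1' : F 1 = 1 := rfl
            rw [hx3, alphaBar_of_isFib h3]
            omega
          · have hstep : F m < F (m + 1) := F_lt_F_succ hm
            have hpm : 1 ≤ F m := F_pos m
            have hb1 : F (m + 2) < x := by omega
            have hb2 : x < F (m + 2 + 1) := by
              have e3 : F (m + 2 + 1) = F (m + 2) + F (m + 1) := F_add_two (m + 1)
              omega
            have hix : iotaBar x = F (m + 1) := by
              rw [iotaBar_of_between hb1 hb2]
              show x - 2 * F m = _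
              omega
            rw [← alphaBar_iotaBar x, hix, alphaBar_of_isFib (isFib_F _)]
            exact F_mono hk
        have hR : F ℓ ≤ F (m + 4) := F_mono (by omega)
        exact ⟨fun _ => hR, fun _ => hLHS⟩
      · -- case C : F m < x < F (m+2) + F m, so F (m+3) < y < F (m+4)
        set y := x + 2 * F (m + 1) with hy
        have hF2 : F (m + 2) = F (m + 1) + F m := F_add_two m
        have hF3 : F (m + 3) = F (m + 2) + F (m + 1) := F_add_two (m + 1)
        have hF4 : F (m + 3 + 1) = F (m + 3) + F (m + 2) := F_add_two (m + 2)
        have hy1 : F (m + 3) < y := by omega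
        have hy2 : y < F (m + 3 + 1) := by omega
        have hiy : iotaBar y = x := by
          rw [iotaBar_of_between hy1 hy2]
          show y - 2 * F (m + 1) = x
          omega
        rw [← alphaBar_iotaBar y, hiy]

theorem VBar_translation_bijection (k ℓ : ℕ) (hℓ : 1 ≤ ℓ) (hk : ℓ + 2 ≤ k) :
    Set.BijOn (fun x => x + 2 * F (k - 2))
      (VBar ℓ ∩ Set.Icc (F ℓ) (F (k - 1) + F (k - 3)))
      (VBar ℓ ∩ Set.Icc (F ℓ + 2 * F (k - 2)) (F (k + 1))) := by
  obtain ⟨m, rfl⟩ : ∃ m, k = m + 3 := ⟨k - 3, by omega⟩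
  have hmk1 : m + 3 - 1 = m + 2 := by omega
  have hmk2 : m + 3 - 2 = m + 1 := by omega
  have hmk3 : m + 3 - 3 = m := by omega
  rw [hmk1, hmk2, hmk3]
  have e1 : F (m + 2) = F (m + 1) + F m := F_add_two m
  have e2 : F (m + 3) = F (m + 2) + F (m + 1) := F_add_two (m + 1)
  have e3 : F (m + 3 + 1) = F (m + 3) + F (m + 2) := F_add_two (m + 2)
  have hFpos := F_pos ℓ
  have key : ∀ x, F ℓ ≤ x → x ≤ F (m + 2) + F m →
      (F ℓ ≤ alphaBar x ↔ F ℓ ≤ alphaBar (x + 2 * F (m + 1))) :=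
    fun x h1 h2 => main_lemma m ℓ x hℓ (by omega) h1 h2
  have hinj : Set.InjOn (fun x => x + 2 * F (m + 1))
      (VBar ℓ ∩ Set.Icc (F ℓ) (F (m + 2) + F m)) := by
    intro a _ b _ hab
    simpa using hab
  have himg : (fun x => x + 2 * F (m + 1)) ''
      (VBar ℓ ∩ Set.Icc (F ℓ) (F (m + 2) + F m)) =
      VBar ℓ ∩ Set.Icc (F ℓ + 2 * F (m + 1)) (F (m + 3 + 1)) := by
    ext y
    simp only [Set.mem_image, Set.mem_inter_iff, Set.mem_Icc]
    constructor
    · rintro ⟨x, ⟨hV, hx1, hx2⟩, rfl⟩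
      exact ⟨(key x hx1 hx2).mp hV, by omega, by omega⟩
    · rintro ⟨hV, h1, h2⟩
      have hrw : y - 2 * F (m + 1) + 2 * F (m + 1) = y := by omega
      refine ⟨y - 2 * F (m + 1), ⟨?_, by omega, by omega⟩, by omega⟩
      exact (key _ (by omega) (by omega)).mpr (by rwa [hrw])
  exact himg ▸ hinj.bijOn_image
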